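/- If T is a random tree with law π satisfying the Markov hypotheses with tree-shift f, then π({λ}) = μ_π(λ) · Π_{h ∈ f⁻¹(λ)} (1 − μ_π(h)/μ_π(λ)). -/

import Mathlib

open Finset
open scoped Classical

/-- The probability, under the law `π` on the finite collection `TT` of trees,
of the event `E`. -/
noncomputable def prOf {A : Type*} [DecidableEq A]
    (TT : Finset (Finset (List A))) (π : Finset (List A) → ℝ)
    (E : Finset (List A) → Prop) : ℝ :=
  ∑ t ∈ TT, if E t then π t else 0

/-- The mean occupation `μ_π(v) = P(T(v) = 1)` of node `v`. -/
noncomputable def muOf {A : Type*} [DecidableEq A]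
    (TT : Finset (Finset (List A))) (π : Finset (List A) → ℝ) (v : List A) : ℝ :=
  prOf TT π (fun t => v ∈ t)

/-- `f` is a tree-shift on `V`: for each nonempty node `w ∈ V`, `f w` is the father or
a brother of `w`, and some iterate of `f` sends `w` to the root `λ = []`. -/
def IsTreeShift {A : Type*} (V : Finset (List A)) (f : List A → List A) : Prop :=
  (∀ (a : A) (u : List A), (a :: u) ∈ V →
      f (a :: u) = u ∨ ∃ b : A, b ≠ a ∧ f (a :: u) = b :: u) ∧
  (∀ v ∈ V, v ≠ [] → ∃ k : ℕ, f^[k] v = [])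

/-- The Markov hypotheses for a random tree with law `π` (supported on the finite
collection `TT` of trees with node set `V`) with respect to the tree-shift `f`:
(a) `0 < μ_π(w) < μ_π(f w) < 1`; (b) `P(T(w) = 1, T(f w) = 0) = 0`;
(c) the Markov conditional-probability property. -/
def MarkovHyp {A : Type*} [DecidableEq A] (V : Finset (List A))
    (TT : Finset (Finset (List A))) (π : Finset (List A) → ℝ)
    (f : List A → List A) : Prop :=
  (∀ w ∈ V, w ≠ [] →
      0 < muOf TT π w ∧ muOf TT π w < muOf TT π (f w) ∧ muOf TT π (f w) < 1) ∧
  (∀ w ∈ V, w ≠ [] → prOf TT π (fun t => w ∈ t ∧ f w ∉ t) = 0) ∧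
  (∀ w ∈ V, w ≠ [] → ∀ I J : Finset (List A), I ⊆ V → J ⊆ V →
      f w ∈ I → w ∉ I ∪ J →
      0 < prOf TT π (fun t => I ⊆ t ∧ ∀ u ∈ J, u ∉ t) →
      prOf TT π (fun t => w ∈ t ∧ I ⊆ t ∧ ∀ u ∈ J, u ∉ t) /
          prOf TT π (fun t => I ⊆ t ∧ ∀ u ∈ J, u ∉ t) =
        prOf TT π (fun t => w ∈ t ∧ f w ∈ t) / prOf TT π (fun t => f w ∈ t))


/-!
Up to π-null trees, `T = {λ}` is the event that `λ ∈ T` while no node of `f⁻¹(λ)` is in `T`.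
Indeed, any other tree containing `λ` contains a depth-one node; the `f`-orbit of a depth-one
node stays at depth one until it hits `λ`, and its last node before `λ` lies in `f⁻¹(λ)`, so the
orbit leaves `T` at some step `w ∈ T`, `f w ∉ T`, an event of probability zero by (b).
The probability of that event factorizes when the nodes of `f⁻¹(λ)` are excluded one at a time:
the Markov property (c) with `I = {λ}` gives each new exclusion the factor `1 - μ(h)/μ(λ)`.
-/

section Prob

variable {A : Type*} [DecidableEq A] {TT : Finset (Finset (List A))} {π : Finset (List A) → ℝ}

lemma prOf_congr {E F : Finset (List A) → Prop} (h : ∀ t ∈ TT, (E t ↔ F t)) :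
    prOf TT π E = prOf TT π F :=
  Finset.sum_congr rfl fun t ht => by simp only [h t ht]

lemma prOf_eq_and_add_and_not (E P : Finset (List A) → Prop) :
    prOf TT π E = prOf TT π (fun t => E t ∧ P t) + prOf TT π (fun t => E t ∧ ¬ P t) := by
  simp only [prOf, ← Finset.sum_add_distrib]
  refine Finset.sum_congr rfl fun t _ => ?_
  by_cases hE : E t <;> by_cases hP : P t <;> simp [hE, hP]

lemma prOf_eq_of_imp_of_null {E F : Finset (List A) → Prop} (hFE : ∀ t ∈ TT, F t → E t)
    (hnull : ∀ t ∈ TT, E t → ¬ F t → π t = 0) : prOf TT π E = prOf TT π F :=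
  Finset.sum_congr rfl fun t ht => by
    by_cases hF : F t
    · simp [hF, hFE t ht hF]
    · by_cases hE : E t
      · simp [hE, hF, hnull t ht hE hF]
      · simp [hE, hF]

lemma prOf_eq_apply {s : Finset (List A)} (hs : s ∈ TT) : prOf TT π (· = s) = π s :=
  (Finset.sum_eq_single_of_mem s hs fun _ _ hts => if_neg hts).trans (if_pos rfl)

lemma eq_zero_of_prOf_eq_zero (hπ0 : ∀ t, 0 ≤ π t) {E : Finset (List A) → Prop}
    (h : prOf TT π E = 0) {t : Finset (List A)} (ht : t ∈ TT) (hE : E t) : π t = 0 := by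
  have hnn : ∀ s ∈ TT, 0 ≤ if E s then π s else 0 := fun s _ => by
    split_ifs
    exacts [hπ0 s, le_rfl]
  simpa [hE] using (Finset.sum_eq_zero_iff_of_nonneg hnn).mp h t ht

end Prob

lemma exists_singleton_mem_of_ne_nil {A : Type*} {t : Finset (List A)}
    (ht : ∀ (a : A) (w : List A), a :: w ∈ t → w ∈ t) :
    ∀ {v : List A}, v ∈ t → v ≠ [] → ∃ a, [a] ∈ t
  | [], _, hne => absurd rfl hne
  | [a], hv, _ => ⟨a, hv⟩
  | a :: _ :: _, hv, _ => exists_singleton_mem_of_ne_nil ht (ht a _ hv) (List.cons_ne_nil _ _)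

lemma IsTreeShift.exists_mem_and_map_not_mem {A : Type*} {V : Finset (List A)}
    {f : List A → List A} (hf : IsTreeShift V f) (hV : ∀ a b : A, [a] ∈ V → [b] ∈ V)
    {t : Finset (List A)} (ht : ∀ h ∈ V, h ≠ [] → f h = [] → h ∉ t) {a : A}
    (ha : [a] ∈ V) (hat : [a] ∈ t) : ∃ w ∈ V, w ≠ [] ∧ w ∈ t ∧ f w ∉ t := by
  obtain ⟨n, hn⟩ := hf.2 [a] ha (List.cons_ne_nil _ _)
  induction n generalizing a with
  | zero => exact absurd hn (List.cons_ne_nil _ _)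
  | succ n ih =>
    rcases hf.1 a [] ha with hfa | ⟨b, -, hfa⟩
    · exact absurd hat (ht [a] ha (List.cons_ne_nil _ _) hfa)
    · by_cases hbt : [b] ∈ t
      · exact ih (hV a b ha) hbt (by rwa [Function.iterate_succ_apply, hfa] at hn)
      · exact ⟨[a], ha, List.cons_ne_nil _ _, hat, hfa ▸ hbt⟩

namespace MarkovHyp

variable {A : Type*} [DecidableEq A] {V : Finset (List A)} {TT : Finset (Finset (List A))}
  {π : Finset (List A) → ℝ} {f : List A → List A}

lemma eq_zero_of_mem_of_map_not_mem (hM : MarkovHyp V TT π f) (hπ0 : ∀ t, 0 ≤ π t)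
    {t : Finset (List A)} (ht : t ∈ TT) {w : List A} (hwV : w ∈ V) (hw : w ≠ [])
    (hwt : w ∈ t) (hfwt : f w ∉ t) : π t = 0 :=
  eq_zero_of_prOf_eq_zero hπ0 (hM.2.1 w hwV hw) ht ⟨hwt, hfwt⟩

lemma prOf_mem_and_map_mem (hM : MarkovHyp V TT π f) {w : List A} (hwV : w ∈ V)
    (hw : w ≠ []) : prOf TT π (fun t => w ∈ t ∧ f w ∈ t) = muOf TT π w := by
  rw [muOf, prOf_eq_and_add_and_not (fun t => w ∈ t) (fun t => f w ∈ t), hM.2.1 w hwV hw,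
    add_zero]

lemma muOf_root_pos (hM : MarkovHyp V TT π f) {h : List A} (hhV : h ∈ V) (hh : h ≠ [])
    (hfh : f h = []) : 0 < muOf TT π [] := by
  obtain ⟨hpos, hlt, -⟩ := hM.1 h hhV hh
  rw [hfh] at hlt
  exact hpos.trans hlt

lemma one_sub_div_muOf_root_pos (hM : MarkovHyp V TT π f) {h : List A} (hhV : h ∈ V)
    (hh : h ≠ []) (hfh : f h = []) : 0 < 1 - muOf TT π h / muOf TT π [] := by
  have hlt := (hM.1 h hhV hh).2.1
  rw [hfh] at hlt
  rw [sub_pos, div_lt_one (hM.muOf_root_pos hhV hh hfh)]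
  exact hlt

lemma eq_zero_of_preimage_root_not_mem (hM : MarkovHyp V TT π f) (hπ0 : ∀ t, 0 ≤ π t)
    (hf : IsTreeShift V f) (hV : ∀ a b : A, [a] ∈ V → [b] ∈ V)
    (hTT : ∀ t ∈ TT, t ⊆ V ∧ ∀ (a : A) (w : List A), a :: w ∈ t → w ∈ t)
    {t : Finset (List A)} (ht : t ∈ TT) (hroot : [] ∈ t)
    (hpre : ∀ h ∈ V.filter (fun h => h ≠ [] ∧ f h = []), h ∉ t) (hne : t ≠ {[]}) :
    π t = 0 := by
  obtain ⟨htV, hclosed⟩ := hTT t ht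
  obtain ⟨v, hvt, hv⟩ : ∃ v ∈ t, v ≠ [] := by
    by_contra! hall
    exact hne (Finset.eq_singleton_iff_unique_mem.mpr ⟨hroot, hall⟩)
  obtain ⟨a, hat⟩ := exists_singleton_mem_of_ne_nil hclosed hvt hv
  obtain ⟨w, hwV, hw, hwt, hfwt⟩ := hf.exists_mem_and_map_not_mem hV
    (fun h hhV hh hfh => hpre h (Finset.mem_filter.mpr ⟨hhV, hh, hfh⟩)) (htV hat) hat
  exact hM.eq_zero_of_mem_of_map_not_mem hπ0 ht hwV hw hwt hfwt

lemma prOf_root_mem_insert (hM : MarkovHyp V TT π f) (hrootV : [] ∈ V) {h : List A}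
    (hhV : h ∈ V) (hh : h ≠ []) (hfh : f h = []) {J : Finset (List A)} (hJV : J ⊆ V)
    (hhJ : h ∉ J) (hpos : 0 < prOf TT π (fun t => [] ∈ t ∧ ∀ u ∈ J, u ∉ t)) :
    prOf TT π (fun t => [] ∈ t ∧ ∀ u ∈ insert h J, u ∉ t) =
      prOf TT π (fun t => [] ∈ t ∧ ∀ u ∈ J, u ∉ t) * (1 - muOf TT π h / muOf TT π []) := by
  have hI : ∀ t : Finset (List A), ({[]} ⊆ t ∧ ∀ u ∈ J, u ∉ t) ↔ ([] ∈ t ∧ ∀ u ∈ J, u ∉ t) :=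
    fun t => by rw [Finset.singleton_subset_iff]
  have hmarkov := hM.2.2 h hhV hh {[]} J (Finset.singleton_subset_iff.mpr hrootV) hJV
    (by rw [hfh]; exact Finset.mem_singleton_self _)
    (by simp [hh, hhJ]) (by simpa only [hI] using hpos)
  rw [hM.prOf_mem_and_map_mem hhV hh, hfh, ← muOf] at hmarkov
  simp only [hI] at hmarkov
  have hin : prOf TT π (fun t => ([] ∈ t ∧ ∀ u ∈ J, u ∉ t) ∧ h ∈ t) =
      prOf TT π (fun t => h ∈ t ∧ [] ∈ t ∧ ∀ u ∈ J, u ∉ t) :=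
    prOf_congr fun t _ => by tauto
  have hout : prOf TT π (fun t => ([] ∈ t ∧ ∀ u ∈ J, u ∉ t) ∧ h ∉ t) =
      prOf TT π (fun t => [] ∈ t ∧ ∀ u ∈ insert h J, u ∉ t) :=
    prOf_congr fun t _ => by simp only [Finset.forall_mem_insert]; tauto
  have hsplit := prOf_eq_and_add_and_not (TT := TT) (π := π)
    (fun t => [] ∈ t ∧ ∀ u ∈ J, u ∉ t) (fun t => h ∈ t)
  rw [hin, hout, (div_eq_iff hpos.ne').mp hmarkov] at hsplit
  linear_combination -hsplit

lemma prOf_root_mem_eq_prod (hM : MarkovHyp V TT π f) (hrootV : [] ∈ V) {J : Finset (List A)}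
    (hJ : J ⊆ V.filter (fun h => h ≠ [] ∧ f h = [])) :
    prOf TT π (fun t => [] ∈ t ∧ ∀ u ∈ J, u ∉ t) =
      muOf TT π [] * ∏ h ∈ J, (1 - muOf TT π h / muOf TT π []) := by
  induction J using Finset.induction_on with
  | empty => simp [muOf]
  | @insert h J hhJ ih =>
    rw [Finset.insert_subset_iff] at hJ
    obtain ⟨hhV, hh, hfh⟩ := Finset.mem_filter.mp hJ.1
    have hpos : 0 < muOf TT π [] * ∏ h ∈ J, (1 - muOf TT π h / muOf TT π []) := by
      refine mul_pos (hM.muOf_root_pos hhV hh hfh) (Finset.prod_pos fun g hg => ?_)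
      obtain ⟨hgV, hg, hfg⟩ := Finset.mem_filter.mp (hJ.2 hg)
      exact hM.one_sub_div_muOf_root_pos hgV hg hfg
    rw [hM.prOf_root_mem_insert hrootV hhV hh hfh (hJ.2.trans (Finset.filter_subset _ _)) hhJ
      (ih hJ.2 ▸ hpos), ih hJ.2, Finset.prod_insert hhJ]
    ring

end MarkovHyp

theorem stmt_15_general
    {A : Type*} [DecidableEq A]
    (L : ℕ)
    (V : Finset (List A)) (hV : ∀ l : List A, l ∈ V ↔ l.length ≤ L)
    (TT : Finset (Finset (List A)))
    (hTT : ∀ t, t ∈ TT ↔ t ⊆ V ∧ ∀ (a : A) (w : List A), a :: w ∈ t → w ∈ t)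
    (π : Finset (List A) → ℝ)
    (hπ0 : ∀ t, 0 ≤ π t)
    (f : List A → List A) (hf : IsTreeShift V f)
    (hM : MarkovHyp V TT π f) :
    π {([] : List A)} =
      muOf TT π [] *
        ∏ h ∈ V.filter (fun h => h ≠ [] ∧ f h = []),
          (1 - muOf TT π h / muOf TT π []) := by
  have hrootV : [] ∈ V := (hV []).2 (Nat.zero_le L)
  have hV1 : ∀ a b : A, [a] ∈ V → [b] ∈ V := fun a b ha => (hV [b]).2 ((hV [a]).1 ha)
  have hroot : {[]} ∈ TT := (hTT _).2 ⟨Finset.singleton_subset_iff.mpr hrootV, by simp⟩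
  rw [← prOf_eq_apply (π := π) hroot, ← hM.prOf_root_mem_eq_prod hrootV subset_rfl]
  symm
  refine prOf_eq_of_imp_of_null ?_ fun t ht hE hne =>
    hM.eq_zero_of_preimage_root_not_mem hπ0 hf hV1 (fun t ht => (hTT t).1 ht) ht hE.1 hE.2 hne
  rintro t - rfl
  exact ⟨Finset.mem_singleton_self _, fun u hu hut =>
    (Finset.mem_filter.mp hu).2.1 (Finset.mem_singleton.mp hut)⟩

/-- formula (A.13): if the random tree `T` with law `π` satisfies the
Markov hypotheses with tree-shift `f`, then
`π({λ}) = μ_π(λ) ∏_{h ∈ f⁻¹(λ)} (1 - μ_π(h)/μ_π(λ))`. -/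
theorem stmt_15
    {A : Type*} [Fintype A] [DecidableEq A] [Nonempty A]
    (L : ℕ) (hL : 0 < L)
    (V : Finset (List A)) (hV : ∀ l : List A, l ∈ V ↔ l.length ≤ L)
    (TT : Finset (Finset (List A)))
    (hTT : ∀ t, t ∈ TT ↔ t ⊆ V ∧ ∀ (a : A) (w : List A), a :: w ∈ t → w ∈ t)
    (π : Finset (List A) → ℝ)
    (hπ0 : ∀ t, 0 ≤ π t) (hπ1 : ∑ t ∈ TT, π t = 1)
    (f : List A → List A) (hf : IsTreeShift V f)
    (hM : MarkovHyp V TT π f) :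
    π {([] : List A)} =
      muOf TT π [] *
        ∏ h ∈ V.filter (fun h => h ≠ [] ∧ f h = []),
          (1 - muOf TT π h / muOf TT π []) :=
  stmt_15_general L V hV TT hTT π hπ0 f hf hM
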